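/- arXiv:1705.10702 — 2 statements merged into one kernel-verified Lean document; each statement's English description precedes it below -/
import Mathlib

section
/- Let A = {x ∈ ℝⁿ : H x ≤ b} be a polytope given by a matrix H ∈ ℝ^{m×n} and a vector b ∈ ℝ^m (with the inequality read componentwise), and let B = {e ∈ ℝⁿ : −r ≤ e ≤ r} be a box given by r ∈ ℝⁿ with r ≥ 0 componentwise. Then the Pontryagin set difference satisfies A ⊖ B = {x ∈ ℝⁿ : H x ≤ b − |H| r}, where |H| denotes the entrywise absolute value of H. -/
/-- The Pontryagin set difference `A ⊖ B = {x | x + e ∈ A for all e ∈ B}`. -/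
def pontryaginDiff {n : ℕ} (A B : Set (Fin n → ℝ)) : Set (Fin n → ℝ) :=
  {x | ∀ e ∈ B, x + e ∈ A}

/-- For a polytope `A = {x | H x ≤ b}` and a box `B = {e | -r ≤ e ≤ r}` with `r ≥ 0`
componentwise, the Pontryagin difference is `A ⊖ B = {x | H x ≤ b - |H| r}`, where `|H|`
is the entrywise absolute value of `H`. -/
theorem pontryaginDiff_polytope_box {n m : ℕ}
    (H : Matrix (Fin m) (Fin n) ℝ) (b : Fin m → ℝ) (r : Fin n → ℝ) (hr : 0 ≤ r) :
    pontryaginDiff {x | H.mulVec x ≤ b} {e | -r ≤ e ∧ e ≤ r} =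
      {x | H.mulVec x ≤ b - (Matrix.of fun i j => |H i j|).mulVec r} := by
  ext x
  simp only [pontryaginDiff, Set.mem_setOf_eq]
  constructor
  · intro h i
    set e : Fin n → ℝ := fun j => if 0 ≤ H i j then r j else -(r j) with he
    have heB : -r ≤ e ∧ e ≤ r := by
      constructor <;> intro j <;> have hj : (0:ℝ) ≤ r j := hr j <;>
        simp only [he, Pi.neg_apply] <;> split <;> linarith
    have := h e heB i
    have hHe : H.mulVec e i = (Matrix.of fun i j => |H i j|).mulVec r i := by
      simp only [Matrix.mulVec, dotProduct, Matrix.of_apply]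
      apply Finset.sum_congr rfl
      intro j _
      simp only [he]
      rcases le_or_gt 0 (H i j) with hpos | hneg
      · rw [if_pos hpos, abs_of_nonneg hpos]
      · rw [if_neg (not_le.mpr hneg), abs_of_neg hneg]; ring
    simp only [Matrix.mulVec_add, Pi.add_apply] at this
    rw [hHe] at this
    simp only [Pi.sub_apply]
    linarith
  · intro h e heB i
    simp only [Matrix.mulVec_add, Pi.add_apply]
    have h1 : H.mulVec e i ≤ (Matrix.of fun i j => |H i j|).mulVec r i := by
      simp only [Matrix.mulVec, dotProduct, Matrix.of_apply]
      apply Finset.sum_le_sum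
      intro j _
      calc H i j * e j ≤ |H i j * e j| := le_abs_self _
        _ = |H i j| * |e j| := abs_mul _ _
        _ ≤ |H i j| * r j := by
            apply mul_le_mul_of_nonneg_left _ (abs_nonneg _)
            exact abs_le.mpr ⟨heB.1 j, heB.2 j⟩
    have h2 := h i
    simp only [Pi.sub_apply] at h2
    linarith
end

section
/- Let e be a centered multivariate Gaussian random vector on ℝⁿ with covariance matrix Σ, let h₁, …, h_m ∈ ℝⁿ, and let p ∈ (0, 1). Then the polytopic set R = {e : h_jᵀ e ≤ Φ⁻¹(1 − (1−p)/m) · √(h_jᵀ Σ h_j) for all j = 1, …, m} satisfies Pr(e ∈ R) ≥ p; i.e., R is a probabilistic reachable set of probability level p for e. -/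
open MeasureTheory ProbabilityTheory Matrix

/-- A measure `ν` on `ι → ℝ` is a multivariate Gaussian with mean `m` and covariance `S`
if it is the law of `m + A z` where `z` is a standard Gaussian vector and `A Aᵀ = S`. -/
def IsMvGaussian {ι : Type*} [Fintype ι] (ν : Measure (ι → ℝ))
    (m : ι → ℝ) (S : Matrix ι ι ℝ) : Prop :=
  ∃ (k : ℕ) (A : Matrix ι (Fin k) ℝ), A * A.transpose = S ∧
    ν = Measure.map (fun z => m + A.mulVec z)
      (Measure.pi fun _ : Fin k => gaussianReal 0 1)

/-- The cumulative distribution function of the standard normal distribution. -/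
noncomputable def stdNormalCDF : ℝ → ℝ := fun x => cdf (gaussianReal 0 1) x

/-- The quantile function `Φ⁻¹` of the standard normal distribution. -/
noncomputable def stdNormalQuantile (p : ℝ) : ℝ := sInf {x : ℝ | p ≤ stdNormalCDF x}

/-!
Each half-space constraint `hⱼᵀ e ≤ c` involves only the scalar `hⱼᵀ e`, which is a centered real
Gaussian of variance `hⱼᵀ Σ hⱼ`. Choosing `c = Φ⁻¹(1 - ε) √(hⱼᵀ Σ hⱼ)` with `ε = (1 - p)/m`
therefore bounds the probability that the `j`-th constraint fails by `ε` (right continuity of `Φ`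
gives `Φ(Φ⁻¹(t)) ≥ t` for the generalized inverse), and the union bound over the `m` constraints
bounds the probability of leaving the polytope by `1 - p`.
-/

open Set Topology
open scoped ENNReal NNReal

lemma StieltjesFunction.le_apply_sInf (f : StieltjesFunction ℝ) {t : ℝ}
    (hne : {x | t ≤ f x}.Nonempty) (hbdd : BddBelow {x | t ≤ f x}) :
    t ≤ f (sInf {x | t ≤ f x}) := by
  set a := sInf {x | t ≤ f x}
  have hright : ∀ᶠ x in 𝓝[>] a, t ≤ f x := by
    filter_upwards [self_mem_nhdsWithin] with x hx
    obtain ⟨y, hy, hyx⟩ := (csInf_lt_iff hbdd hne).mp hx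
    exact hy.trans (f.mono hyx.le)
  exact ge_of_tendsto ((f.right_continuous a).mono_left (nhdsWithin_mono _ Ioi_subset_Ici_self))
    hright

lemma le_cdf_sInf (μ : Measure ℝ) {t : ℝ} (ht0 : 0 < t) (ht1 : t < 1) :
    t ≤ cdf μ (sInf {x | t ≤ cdf μ x}) := by
  refine (cdf μ).le_apply_sInf ?_ ?_
  · obtain ⟨x, hx⟩ := ((tendsto_cdf_atTop μ).eventually (eventually_gt_nhds ht1)).exists
    exact ⟨x, hx.le⟩
  · obtain ⟨x₀, hx₀⟩ := Filter.eventually_atBot.mp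
      ((tendsto_cdf_atBot μ).eventually (eventually_lt_nhds ht0))
    exact ⟨x₀, fun y hy => not_lt.mp fun hyx => (hx₀ y hyx.le).not_ge hy⟩

lemma measure_Ioi_eq_one_sub_ofReal_cdf (μ : Measure ℝ) [IsProbabilityMeasure μ] (x : ℝ) :
    μ (Ioi x) = 1 - ENNReal.ofReal (cdf μ x) := by
  rw [← compl_Iic, prob_compl_eq_one_sub measurableSet_Iic, ofReal_cdf]

lemma gaussianReal_Ioi_mul_sqrt_le (v : ℝ≥0) (q : ℝ) :
    gaussianReal 0 v (Ioi (q * √v)) ≤ gaussianReal 0 1 (Ioi q) := by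
  have hscale : (gaussianReal 0 1).map (√v * ·) = gaussianReal 0 v := by
    rw [gaussianReal_map_const_mul]
    congr 1
    · simp
    · ext; simp
  rw [← hscale, Measure.map_apply (measurable_const_mul _) measurableSet_Ioi]
  refine measure_mono fun x hx => ?_
  rw [mem_preimage, mem_Ioi, mul_comm q] at hx
  exact lt_of_mul_lt_mul_left hx (Real.sqrt_nonneg v)

lemma gaussianReal_Ioi_stdNormalQuantile_mul_sqrt_le {ε : ℝ} (hε0 : 0 < ε) (hε1 : ε < 1)
    (v : ℝ≥0) :
    gaussianReal 0 v (Ioi (stdNormalQuantile (1 - ε) * √v)) ≤ ENNReal.ofReal ε := calc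
  _ ≤ gaussianReal 0 1 (Ioi (stdNormalQuantile (1 - ε))) := gaussianReal_Ioi_mul_sqrt_le v _
  _ = 1 - ENNReal.ofReal (stdNormalCDF (stdNormalQuantile (1 - ε))) :=
    measure_Ioi_eq_one_sub_ofReal_cdf _ _
  _ ≤ 1 - ENNReal.ofReal (1 - ε) :=
    tsub_le_tsub_left (ENNReal.ofReal_le_ofReal (le_cdf_sInf _ (by linarith) (by linarith))) 1
  _ = ENNReal.ofReal ε := by
    rw [ENNReal.ofReal_sub 1 hε0.le, ENNReal.ofReal_one, ENNReal.sub_sub_cancel ENNReal.one_ne_top]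
    exact ENNReal.ofReal_le_one.mpr hε1.le

lemma Real.sqrt_coe_toNNReal (x : ℝ) : √(x.toNNReal : ℝ) = √x := by
  rcases le_total 0 x with hx | hx
  · rw [Real.coe_toNNReal x hx]
  · rw [Real.toNNReal_of_nonpos hx, NNReal.coe_zero, Real.sqrt_zero,
      Real.sqrt_eq_zero_of_nonpos hx]

lemma map_dotProduct_pi_gaussianReal {ι : Type*} [Fintype ι] (w : ι → ℝ) :
    (Measure.pi fun _ : ι => gaussianReal 0 1).map (w ⬝ᵥ ·) =
      gaussianReal 0 (w ⬝ᵥ w).toNNReal := by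
  set L := innerSL ℝ (WithLp.toLp 2 w : EuclideanSpace ℝ ι)
  have hL : (w ⬝ᵥ ·) = L ∘ WithLp.toLp 2 := by
    funext z
    simp [L, EuclideanSpace.inner_toLp_toLp, dotProduct_comm]
  rw [hL, ← Measure.map_map (by fun_prop) (by fun_prop), map_pi_eq_stdGaussian,
    IsGaussian.map_eq_gaussianReal, integral_strongDual_stdGaussian, variance_dual_stdGaussian,
    innerSL_apply_norm, EuclideanSpace.real_norm_sq_eq]
  simp [dotProduct, sq]

namespace IsMvGaussian

variable {ι : Type*} [Fintype ι] {ν : Measure (ι → ℝ)} {m : ι → ℝ} {S : Matrix ι ι ℝ}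

lemma isProbabilityMeasure (hν : IsMvGaussian ν m S) : IsProbabilityMeasure ν := by
  obtain ⟨k, A, -, rfl⟩ := hν
  exact Measure.isProbabilityMeasure_map (by fun_prop)

lemma map_dotProduct (hν : IsMvGaussian ν m S) (h : ι → ℝ) :
    ν.map (h ⬝ᵥ ·) = gaussianReal (h ⬝ᵥ m) (h ⬝ᵥ S *ᵥ h).toNNReal := by
  obtain ⟨k, A, rfl, rfl⟩ := hν
  have hcomp : (h ⬝ᵥ ·) ∘ (fun z => m + A *ᵥ z) = (h ⬝ᵥ m + ·) ∘ ((h ᵥ* A) ⬝ᵥ ·) := by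
    funext z
    simp [dotProduct_add, dotProduct_mulVec]
  rw [Measure.map_map (by fun_prop) (by fun_prop), hcomp,
    ← Measure.map_map (by fun_prop) (by fun_prop), map_dotProduct_pi_gaussianReal,
    gaussianReal_map_const_add, zero_add, ← mulVec_mulVec, dotProduct_mulVec, mulVec_transpose]

end IsMvGaussian

lemma one_sub_card_mul_le_measure_iInter {α ι : Type*} [MeasurableSpace α] [Fintype ι]
    (μ : Measure α) [IsProbabilityMeasure μ] {s : ι → Set α} {ε : ℝ≥0∞}
    (h : ∀ i, μ (s i)ᶜ ≤ ε) :
    1 - Fintype.card ι * ε ≤ μ (⋂ i, s i) := by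
  have hunion : μ (⋃ i, (s i)ᶜ) ≤ Fintype.card ι * ε := calc
    _ ≤ ∑ i, μ (s i)ᶜ := measure_iUnion_fintype_le μ _
    _ ≤ ∑ _i : ι, ε := Finset.sum_le_sum fun i _ => h i
    _ = Fintype.card ι * ε := by simp
  calc 1 - Fintype.card ι * ε ≤ 1 - μ (⋃ i, (s i)ᶜ) := tsub_le_tsub_left hunion 1
    _ ≤ μ (⋂ i, s i) := by
      rw [← compl_iInter, tsub_le_iff_right, ← measure_univ (μ := μ)]
      exact measure_univ_le_add_compl _

theorem polytope_PRS_general {n m : ℕ} (hm : 0 < m)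
    (S : Matrix (Fin n) (Fin n) ℝ)
    (ν : Measure (Fin n → ℝ)) (hν : IsMvGaussian ν 0 S)
    (h : Fin m → (Fin n → ℝ)) (p : ℝ) (hp : p ∈ Set.Ioo (0 : ℝ) 1) :
    ENNReal.ofReal p ≤
      ν {e | ∀ j : Fin m, h j ⬝ᵥ e ≤
        stdNormalQuantile (1 - (1 - p) / m) * Real.sqrt (h j ⬝ᵥ S.mulVec (h j))} := by
  obtain ⟨hp0, hp1⟩ := hp
  have := hν.isProbabilityMeasure
  have hm_one : (1 : ℝ) ≤ m := Nat.one_le_cast.mpr hm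
  have hε0 : 0 < (1 - p) / m := div_pos (by linarith) (by linarith)
  have hε1 : (1 - p) / m < 1 := (div_lt_one (by linarith)).mpr (by linarith)
  set c : Fin m → ℝ := fun j => stdNormalQuantile (1 - (1 - p) / m) * √(h j ⬝ᵥ S *ᵥ h j)
  have hviolation : ∀ j, ν {e | h j ⬝ᵥ e ≤ c j}ᶜ ≤ ENNReal.ofReal ((1 - p) / m) := by
    intro j
    have hcompl : {e | h j ⬝ᵥ e ≤ c j}ᶜ = (h j ⬝ᵥ ·) ⁻¹' Ioi (c j) := by ext; simp
    rw [hcompl, ← Measure.map_apply (by fun_prop) measurableSet_Ioi, hν.map_dotProduct,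
      dotProduct_zero]
    simpa only [Real.sqrt_coe_toNNReal] using
      gaussianReal_Ioi_stdNormalQuantile_mul_sqrt_le hε0 hε1 (h j ⬝ᵥ S *ᵥ h j).toNNReal
  calc ENNReal.ofReal p = 1 - m * ENNReal.ofReal ((1 - p) / m) := by
        rw [← ENNReal.ofReal_natCast, ← ENNReal.ofReal_mul (by positivity),
          mul_div_cancel₀ _ (by positivity), ← ENNReal.ofReal_one,
          ← ENNReal.ofReal_sub _ (by linarith), sub_sub_cancel]
    _ ≤ ν (⋂ j, {e | h j ⬝ᵥ e ≤ c j}) := by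
      simpa only [Fintype.card_fin] using one_sub_card_mul_le_measure_iInter ν hviolation
    _ = _ := by rw [ofPred_forall]

/-- For a centered Gaussian `e` with covariance `Σ` and half-spaces `h₁, …, h_m`, the
polytope `{e | hⱼᵀ e ≤ Φ⁻¹(1 - (1-p)/m) √(hⱼᵀ Σ hⱼ) ∀ j}` is a probabilistic reachable
set of probability level `p` (by Boole's inequality). -/
theorem polytope_PRS {n m : ℕ} (hm : 0 < m)
    (S : Matrix (Fin n) (Fin n) ℝ) (hS : S.PosSemidef)
    (ν : Measure (Fin n → ℝ)) (hν : IsMvGaussian ν 0 S)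
    (h : Fin m → (Fin n → ℝ)) (p : ℝ) (hp : p ∈ Set.Ioo (0 : ℝ) 1) :
    ENNReal.ofReal p ≤
      ν {e | ∀ j : Fin m, h j ⬝ᵥ e ≤
        stdNormalQuantile (1 - (1 - p) / m) * Real.sqrt (h j ⬝ᵥ S.mulVec (h j))} :=
  polytope_PRS_general hm S ν hν h p hp
end
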